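/- Let (Γ, 𝔞, θ, δ, f) be a Γ-Lie bialgebra, i.e., (𝔞, δ) is a Lie bialgebra, θ : Γ → Aut(𝔞) is a group action by Lie algebra automorphisms, and f : Γ → Λ²𝔞 satisfies: (a) Λ²(θ_γ) ∘ δ ∘ θ_γ⁻¹ = δ + ad(f_γ) for all γ; (b) f_{γγ'} = f_γ + Λ²(θ_γ)(f_{γ'}); (c) each f_γ satisfies the twist equation. Then for all γ, γ' ∈ Γ, the pair (f_γ, Λ²(θ_γ)(f_{γ'})) is a composition of twists: f_γ is a twist of 𝔞, and Λ²(θ_γ)(f_{γ'}) is a twist of 𝔞_{f_γ}. -/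

import Mathlib

open TensorProduct

variable (k : Type) [Field k] (a : Type) [LieRing a] [LieAlgebra k a]

/-- The Lie bracket of `a` as a bilinear map. -/
noncomputable def br2 : a →ₗ[k] a →ₗ[k] a :=
  LinearMap.mk₂ k (fun x y => ⁅x, y⁆) add_lie smul_lie lie_add lie_smul

/-- The Lie bracket as a linear map on the tensor square. -/
noncomputable def brL : a ⊗[k] a →ₗ[k] a := TensorProduct.lift (br2 k a)

/-- The adjoint action of `a` on `a ⊗ a`: `act x (u ⊗ v) = ⁅x,u⁆ ⊗ v + u ⊗ ⁅x,v⁆`,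
which equals `[x ⊗ 1 + 1 ⊗ x, u ⊗ v]` in `U(a) ⊗ U(a)`. -/
noncomputable def act : a →ₗ[k] (a ⊗[k] a →ₗ[k] a ⊗[k] a) where
  toFun x := TensorProduct.map (br2 k a x) LinearMap.id + TensorProduct.map LinearMap.id (br2 k a x)
  map_add' x y := by
    ext u v
    simp [br2, add_lie, TensorProduct.tmul_add, TensorProduct.add_tmul]
    abel
  map_smul' c x := by
    ext u v
    simp [br2, smul_lie, TensorProduct.tmul_add, TensorProduct.smul_tmul', TensorProduct.tmul_smul,
      smul_add]

/-- `adL f` is the map `x ↦ [f, x ⊗ 1 + 1 ⊗ x]`. -/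
noncomputable def adL (f : a ⊗[k] a) : a →ₗ[k] a ⊗[k] a := -((act k a).flip f)

/-- Cyclic permutation `x ⊗ y ⊗ z ↦ y ⊗ z ⊗ x` on the triple tensor product. -/
noncomputable def cyc : a ⊗[k] (a ⊗[k] a) →ₗ[k] a ⊗[k] (a ⊗[k] a) :=
  (TensorProduct.congr (LinearEquiv.refl k a) (TensorProduct.comm k a a)).toLinearMap ∘ₗ
    (TensorProduct.leftComm k a a a).toLinearMap

/-- Sum over cyclic permutations. -/
noncomputable def cycSum (w : a ⊗[k] (a ⊗[k] a)) : a ⊗[k] (a ⊗[k] a) :=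
  w + cyc k a w + cyc k a (cyc k a w)

/-- `(d ⊗ id)` on the tensor square, landing in the triple tensor product. -/
noncomputable def d13 (d : a →ₗ[k] a ⊗[k] a) : a ⊗[k] a →ₗ[k] a ⊗[k] (a ⊗[k] a) :=
  (TensorProduct.assoc k a a a).toLinearMap ∘ₗ TensorProduct.map d LinearMap.id

/-- `(f, g) ↦ [f^{13}, g^{23}]`: on pure tensors `(x ⊗ y, u ⊗ v) ↦ x ⊗ u ⊗ ⁅y,v⁆`. -/
noncomputable def C13_23 : (a ⊗[k] a) ⊗[k] (a ⊗[k] a) →ₗ[k] a ⊗[k] (a ⊗[k] a) :=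
  (TensorProduct.map LinearMap.id (TensorProduct.map LinearMap.id (brL k a))) ∘ₗ
    (TensorProduct.congr (LinearEquiv.refl k a) (TensorProduct.leftComm k a a a)).toLinearMap ∘ₗ
    (TensorProduct.assoc k a a (a ⊗[k] a)).toLinearMap

/-- `(f, g) ↦ [f^{12}, g^{13}]`: on pure tensors `(x ⊗ y, u ⊗ v) ↦ ⁅x,u⁆ ⊗ y ⊗ v`. -/
noncomputable def C12_13 : (a ⊗[k] a) ⊗[k] (a ⊗[k] a) →ₗ[k] a ⊗[k] (a ⊗[k] a) :=
  (TensorProduct.map (brL k a) LinearMap.id) ∘ₗ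
    (TensorProduct.tensorTensorTensorComm k a a a a).toLinearMap

/-- `(f, g) ↦ [f^{12}, g^{23}]`: on pure tensors `(x ⊗ y, u ⊗ v) ↦ x ⊗ ⁅y,u⁆ ⊗ v`. -/
noncomputable def C12_23 : (a ⊗[k] a) ⊗[k] (a ⊗[k] a) →ₗ[k] a ⊗[k] (a ⊗[k] a) :=
  (TensorProduct.map LinearMap.id (TensorProduct.map (brL k a) LinearMap.id)) ∘ₗ
    (TensorProduct.congr (LinearEquiv.refl k a) (TensorProduct.assoc k a a a).symm).toLinearMap ∘ₗ
    (TensorProduct.assoc k a a (a ⊗[k] a)).toLinearMap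

/-- Membership in `Λ²a`: antisymmetry in `a ⊗ a`. -/
def IsAntisym (w : a ⊗[k] a) : Prop := TensorProduct.comm k a a w = -w

/-- The 1-cocycle condition for a cobracket. -/
def IsCocycle (d : a →ₗ[k] a ⊗[k] a) : Prop :=
  ∀ x y : a, d ⁅x, y⁆ = act k a x (d y) - act k a y (d x)

/-- The co-Jacobi identity. -/
def IsCoJacobi (d : a →ₗ[k] a ⊗[k] a) : Prop :=
  ∀ x : a, cycSum k a ((d13 k a d) (d x)) = 0

/-- `(a, d)` is a Lie bialgebra. -/
def IsLieCobracket (d : a →ₗ[k] a ⊗[k] a) : Prop :=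
  (∀ x, IsAntisym k a (d x)) ∧ IsCocycle k a d ∧ IsCoJacobi k a d

/-- The classical twist equation `(d ⊗ id)(f) + [f^{13}, f^{23}] + cyclic permutations = 0`. -/
def IsTwist (d : a →ₗ[k] a ⊗[k] a) (f : a ⊗[k] a) : Prop :=
  cycSum k a ((d13 k a d) f + C13_23 k a (f ⊗ₜ f)) = 0

/-- The twisted cobracket `δ + ad(f)`. -/
noncomputable def twistCobr (d : a →ₗ[k] a ⊗[k] a) (f : a ⊗[k] a) : a →ₗ[k] a ⊗[k] a :=
  d + adL k a f


/-! For antisymmetric `F` and `G`, after cyclic symmetrisation `(ad(F) ⊗ id)(G)` contributes exactly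
the cross terms `[F^{13}, G^{23}] + [G^{13}, F^{23}]` of the twist equation for `F + G`. Hence the
defect of `F + G` relative to `δ` is the defect of `F` relative to `δ` plus the defect of `G`
relative to `δ + ad(F)`. Applied to `f_{γγ'} = f_γ + Λ²(θ_γ)(f_{γ'})`, with `f_γ` and `f_{γγ'}`
twists of `δ`, this makes `Λ²(θ_γ)(f_{γ'})` a twist of `δ + ad(f_γ)`. -/

section Twists

variable {k a}

@[simp]
lemma cyc_tmul (x y z : a) : cyc k a (x ⊗ₜ[k] (y ⊗ₜ[k] z)) = y ⊗ₜ[k] (z ⊗ₜ[k] x) := by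
  simp [cyc]

lemma cyc_cyc_cyc (w : a ⊗[k] (a ⊗[k] a)) : cyc k a (cyc k a (cyc k a w)) = w := by
  have h : cyc k a ∘ₗ cyc k a ∘ₗ cyc k a = LinearMap.id := by
    ext x y z
    simp
  exact DFunLike.congr_fun h w

lemma cycSum_add (v w : a ⊗[k] (a ⊗[k] a)) :
    cycSum k a (v + w) = cycSum k a v + cycSum k a w := by
  simp only [cycSum, map_add]
  abel

lemma cycSum_cyc (w : a ⊗[k] (a ⊗[k] a)) : cycSum k a (cyc k a w) = cycSum k a w := by
  simp only [cycSum, cyc_cyc_cyc]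
  abel

lemma d13_add (d d' : a →ₗ[k] a ⊗[k] a) : d13 k a (d + d') = d13 k a d + d13 k a d' := by
  simp only [d13, TensorProduct.map_add_left, LinearMap.comp_add]

lemma adL_add (F F' : a ⊗[k] a) : adL k a (F + F') = adL k a F + adL k a F' := by
  simp only [adL, map_add, neg_add]

lemma d13_adL (F : a ⊗[k] a) :
    d13 k a (adL k a F) = (C12_13 k a + C12_23 k a) ∘ₗ TensorProduct.mk k _ _ F := by
  induction F using TensorProduct.induction_on with
  | zero => simp [adL, d13]
  | add F F' hF hF' => simp only [adL_add, d13_add, hF, hF', map_add, LinearMap.comp_add]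
  | tmul x y =>
    ext u v
    simp [d13, adL, act, C12_13, C12_23, br2, brL, -lie_skew, ← lie_skew x u, ← lie_skew y u,
      TensorProduct.add_tmul, TensorProduct.neg_tmul, TensorProduct.tmul_neg, add_comm]

lemma C12_13_eq_cyc_cyc_C13_23 :
    C12_13 k a = cyc k a ∘ₗ cyc k a ∘ₗ C13_23 k a ∘ₗ
      TensorProduct.map (TensorProduct.comm k a a).toLinearMap
        (TensorProduct.comm k a a).toLinearMap := by
  ext x y u v
  simp [C12_13, C13_23, brL, br2]

lemma C12_23_eq_neg_cyc_C13_23 :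
    C12_23 k a = -(cyc k a ∘ₗ C13_23 k a ∘ₗ (TensorProduct.comm k _ _).toLinearMap ∘ₗ
      TensorProduct.map LinearMap.id (TensorProduct.comm k a a).toLinearMap) := by
  ext x y u v
  simp [C12_23, C13_23, brL, br2, -lie_skew, ← lie_skew u y, TensorProduct.tmul_neg]

lemma IsAntisym.map {w : a ⊗[k] a} (hw : IsAntisym k a w) (φ : a →ₗ[k] a) :
    IsAntisym k a (TensorProduct.map φ φ w) := by
  rw [IsAntisym, ← TensorProduct.map_comm, hw, map_neg]

lemma cycSum_C12_13 {F G : a ⊗[k] a} (hF : IsAntisym k a F) (hG : IsAntisym k a G) :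
    cycSum k a (C12_13 k a (F ⊗ₜ G)) = cycSum k a (C13_23 k a (F ⊗ₜ G)) := by
  rw [C12_13_eq_cyc_cyc_C13_23]
  simp only [LinearMap.comp_apply, TensorProduct.map_tmul, LinearEquiv.coe_coe]
  rw [hF, hG, TensorProduct.neg_tmul, TensorProduct.tmul_neg, neg_neg, cycSum_cyc, cycSum_cyc]

lemma cycSum_C12_23 {F G : a ⊗[k] a} (hG : IsAntisym k a G) :
    cycSum k a (C12_23 k a (F ⊗ₜ G)) = cycSum k a (C13_23 k a (G ⊗ₜ F)) := by
  rw [C12_23_eq_neg_cyc_C13_23]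
  simp only [LinearMap.neg_apply, LinearMap.comp_apply, TensorProduct.map_tmul, LinearEquiv.coe_coe,
    LinearMap.id_apply, TensorProduct.comm_tmul]
  rw [hG, TensorProduct.neg_tmul, map_neg, map_neg, neg_neg, cycSum_cyc]

lemma cycSum_twist_add {d : a →ₗ[k] a ⊗[k] a} {F G : a ⊗[k] a} (hF : IsAntisym k a F)
    (hG : IsAntisym k a G) :
    cycSum k a (d13 k a d (F + G) + C13_23 k a ((F + G) ⊗ₜ (F + G))) =
      cycSum k a (d13 k a d F + C13_23 k a (F ⊗ₜ F)) +
        cycSum k a (d13 k a (twistCobr k a d F) G + C13_23 k a (G ⊗ₜ G)) := by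
  simp only [twistCobr, d13_add, d13_adL, LinearMap.add_apply, LinearMap.comp_apply,
    TensorProduct.mk_apply, map_add, TensorProduct.tmul_add, TensorProduct.add_tmul, cycSum_add,
    cycSum_C12_13 hF hG, cycSum_C12_23 hG]
  abel

lemma IsTwist.twistCobr_iff {d : a →ₗ[k] a ⊗[k] a} {F G : a ⊗[k] a} (hFd : IsTwist k a d F)
    (hF : IsAntisym k a F) (hG : IsAntisym k a G) :
    IsTwist k a (twistCobr k a d F) G ↔ IsTwist k a d (F + G) := by
  rw [IsTwist, IsTwist, cycSum_twist_add hF hG, hFd, zero_add]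

end Twists

theorem gamma_lie_bialgebra_composition_of_twists_general
    (k : Type) [Field k] (a : Type) [LieRing a] [LieAlgebra k a]
    (Γ : Type) [Group Γ]
    (d : a →ₗ[k] a ⊗[k] a)
    (θ : Γ → (a ≃ₗ⁅k⁆ a))
    (f : Γ → a ⊗[k] a) (hfa : ∀ γ, IsAntisym k a (f γ))
    (hb : ∀ γ γ' : Γ, f (γ * γ') = f γ +
      TensorProduct.map (θ γ).toLieHom.toLinearMap (θ γ).toLieHom.toLinearMap (f γ'))
    (hc : ∀ γ : Γ, IsTwist k a d (f γ)) :
    ∀ γ γ' : Γ, IsTwist k a d (f γ) ∧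
      IsTwist k a (twistCobr k a d (f γ))
        (TensorProduct.map (θ γ).toLieHom.toLinearMap (θ γ).toLieHom.toLinearMap (f γ')) := by
  intro γ γ'
  refine ⟨hc γ, ?_⟩
  rw [(hc γ).twistCobr_iff (hfa γ) ((hfa γ').map _), ← hb]
  exact hc (γ * γ')

/-- in a `Γ`-Lie bialgebra, `(f_γ, Λ²(θ_γ)(f_{γ'}))` is a composition of twists. -/
theorem gamma_lie_bialgebra_composition_of_twists
    (k : Type) [Field k] [CharZero k] (a : Type) [LieRing a] [LieAlgebra k a]
    (Γ : Type) [Group Γ]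
    (d : a →ₗ[k] a ⊗[k] a) (hd : IsLieCobracket k a d)
    (θ : Γ → (a ≃ₗ⁅k⁆ a)) (hθ : ∀ γ γ' : Γ, ∀ x : a, θ (γ * γ') x = θ γ (θ γ' x))
    (f : Γ → a ⊗[k] a) (hfa : ∀ γ, IsAntisym k a (f γ))
    (ha : ∀ (γ : Γ) (x : a),
      TensorProduct.map (θ γ).toLieHom.toLinearMap (θ γ).toLieHom.toLinearMap
          (d ((θ γ).symm x)) = twistCobr k a d (f γ) x)
    (hb : ∀ γ γ' : Γ, f (γ * γ') = f γ +
      TensorProduct.map (θ γ).toLieHom.toLinearMap (θ γ).toLieHom.toLinearMap (f γ'))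
    (hc : ∀ γ : Γ, IsTwist k a d (f γ)) :
    ∀ γ γ' : Γ, IsTwist k a d (f γ) ∧
      IsTwist k a (twistCobr k a d (f γ))
        (TensorProduct.map (θ γ).toLieHom.toLinearMap (θ γ).toLieHom.toLinearMap (f γ')) :=
  gamma_lie_bialgebra_composition_of_twists_general k a Γ d θ f hfa hb hc
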